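/- arXiv:1612.09069 — 4 statements merged into one kernel-verified Lean document; each statement's English description precedes it below -/
import Mathlib

section
/- Let x ∈ E and let x⁺ be an exact proximal point of z = x − η·∇f(x), i.e., x⁺ is a global minimizer of the function w ↦ (1/2)·‖w − z‖² + η·g(w). Then F(x⁺) ≤ F(x) − ((ρ − L)/2)·‖x⁺ − x‖². -/
/-!
The descent lemma `f y ≤ f x + ⟪∇f x, y - x⟫ + (L/2)‖y - x‖²` bounds the smooth part, and
comparing the proximal objective at `x⁺` with its value at the competitor `w = x` gives
`g x⁺ + ⟪∇f x, x⁺ - x⟫ + (ρ/2)‖x⁺ - x‖² ≤ g x`; the inner products cancel when the two are added.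
-/

open Set

theorem norm_sub_sub_smul_sq {E : Type*} [NormedAddCommGroup E] [InnerProductSpace ℝ E]
    (w x v : E) (η : ℝ) :
    ‖w - (x - η • v)‖ ^ 2 = ‖w - x‖ ^ 2 + 2 * η * inner ℝ v (w - x) + ‖η • v‖ ^ 2 := by
  rw [sub_sub_eq_add_sub, add_sub_right_comm, norm_add_sq_real, real_inner_smul_right,
    real_inner_comm]
  ring

theorem HasGradientAt.le_add_inner_add_sq_of_lipschitz
    {E : Type*} [NormedAddCommGroup E] [InnerProductSpace ℝ E] [CompleteSpace E]
    {f : E → ℝ} {f' : E → E} {L : ℝ} (hf : ∀ x, HasGradientAt f (f' x) x)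
    (hlip : ∀ x y, ‖f' x - f' y‖ ≤ L * ‖x - y‖) (x y : E) :
    f y ≤ f x + inner ℝ (f' x) (y - x) + L / 2 * ‖y - x‖ ^ 2 := by
  set v := y - x
  -- The Lipschitz bound gives `φ' ≤ 0` for `t > 0`, and `φ 1 ≤ φ 0` is the claim.
  let φ : ℝ → ℝ := fun t ↦ f (x + t • v) - t * inner ℝ (f' x) v - L / 2 * t ^ 2 * ‖v‖ ^ 2
  have hφ : ∀ t, HasDerivAt φ
      (inner ℝ (f' (x + t • v)) v - inner ℝ (f' x) v - L * t * ‖v‖ ^ 2) t := by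
    intro t
    have hline : HasDerivAt (fun s : ℝ ↦ x + s • v) v t := by
      simpa using ((hasDerivAt_id t).smul_const v).const_add x
    have hcomp : HasDerivAt (fun s : ℝ ↦ f (x + s • v)) (inner ℝ (f' (x + t • v)) v) t :=
      (hf _).hasFDerivAt.comp_hasDerivAt t hline
    refine ((hcomp.fun_sub ((hasDerivAt_id t).mul_const (inner ℝ (f' x) v))).fun_sub
      (((hasDerivAt_pow 2 t).const_mul (L / 2)).mul_const (‖v‖ ^ 2))).congr_deriv ?_
    push_cast
    ring
  have hφ_nonpos : ∀ t ∈ interior (Ici (0 : ℝ)),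
      inner ℝ (f' (x + t • v)) v - inner ℝ (f' x) v - L * t * ‖v‖ ^ 2 ≤ 0 := by
    intro t ht
    rw [interior_Ici, mem_Ioi] at ht
    calc inner ℝ (f' (x + t • v)) v - inner ℝ (f' x) v - L * t * ‖v‖ ^ 2
        = inner ℝ (f' (x + t • v) - f' x) v - L * t * ‖v‖ ^ 2 := by rw [inner_sub_left]
      _ ≤ ‖f' (x + t • v) - f' x‖ * ‖v‖ - L * t * ‖v‖ ^ 2 := by
          gcongr; exact real_inner_le_norm _ _
      _ ≤ L * ‖t • v‖ * ‖v‖ - L * t * ‖v‖ ^ 2 := by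
          gcongr; simpa using hlip (x + t • v) x
      _ = 0 := by rw [norm_smul, Real.norm_of_nonneg ht.le]; ring
  have hanti : AntitoneOn φ (Ici 0) :=
    antitoneOn_of_hasDerivWithinAt_nonpos (convex_Ici 0)
      (fun t _ ↦ (hφ t).continuousAt.continuousWithinAt)
      (fun t _ ↦ (hφ t).hasDerivWithinAt) hφ_nonpos
  have h10 : φ 1 ≤ φ 0 := hanti self_mem_Ici (mem_Ici.2 zero_le_one) zero_le_one
  norm_num [φ, v] at h10
  linarith

theorem exact_prox_sufficient_decrease_general
    {E : Type*} [NormedAddCommGroup E] [InnerProductSpace ℝ E] [FiniteDimensional ℝ E]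
    (f g F : E → ℝ) (f' : E → E) (L η ρ : ℝ)
    (hf : ∀ x, HasGradientAt f (f' x) x)
    (hlip : ∀ x y, ‖f' x - f' y‖ ≤ L * ‖x - y‖)
    (hF : ∀ x, F x = f x + g x)
    (hη : 0 < η) (hρ : ρ = 1 / η)
    (x xp : E)
    (hxp : ∀ w : E, (1 / 2) * ‖xp - (x - η • f' x)‖ ^ 2 + η * g xp ≤
      (1 / 2) * ‖w - (x - η • f' x)‖ ^ 2 + η * g w) :
    F xp ≤ F x - ((ρ - L) / 2) * ‖xp - x‖ ^ 2 := by
  have hdesc := HasGradientAt.le_add_inner_add_sq_of_lipschitz hf hlip x xp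
  have hprox : ‖xp - x‖ ^ 2 / 2 + η * inner ℝ (f' x) (xp - x) + η * g xp ≤ η * g x := by
    have hx := hxp x
    rw [norm_sub_sub_smul_sq, norm_sub_sub_smul_sq, sub_self, norm_zero, inner_zero_right] at hx
    linarith
  have hηρ : η * ρ = 1 := by rw [hρ, mul_one_div_cancel hη.ne']
  rw [hF, hF]
  refine le_of_sub_nonneg (nonneg_of_mul_nonneg_right ?_ hη)
  linear_combination η * hdesc + hprox + ‖xp - x‖ ^ 2 / 2 * hηρ

/-- sufficient decrease of an exact proximal-gradient step.
If `x⁺` is an exact proximal point of `z = x - η • ∇f x`, then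
`F x⁺ ≤ F x - ((ρ - L)/2) * ‖x⁺ - x‖²`. -/
theorem exact_prox_sufficient_decrease
    {E : Type*} [NormedAddCommGroup E] [InnerProductSpace ℝ E] [FiniteDimensional ℝ E]
    (f g F : E → ℝ) (f' : E → E) (L η ρ : ℝ)
    (hL : 0 < L)
    (hf : ∀ x, HasGradientAt f (f' x) x)
    (hlip : ∀ x y, ‖f' x - f' y‖ ≤ L * ‖x - y‖)
    (hg : LowerSemicontinuous g)
    (hF : ∀ x, F x = f x + g x)
    (hη : 0 < η) (hηL : η < 1 / L) (hρ : ρ = 1 / η)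
    (x xp : E)
    (hxp : ∀ w : E, (1 / 2) * ‖xp - (x - η • f' x)‖ ^ 2 + η * g xp ≤
      (1 / 2) * ‖w - (x - η • f' x)‖ ^ 2 + η * g w) :
    F xp ≤ F x - ((ρ - L) / 2) * ‖xp - x‖ ^ 2 :=
  exact_prox_sufficient_decrease_general f g F f' L η ρ hf hlip hF hη hρ x xp hxp
end

section
/- Suppose that in Algorithm niAPG every proximal step is exact, i.e., for every k ≥ 1, x_{k+1} is a global minimizer of w ↦ (1/2)·‖w − z_k‖² + η·g(w). Then for every k ≥ 1: F(x_{k+1}) ≤ min(F(y_k), Δ_k) − ((ρ − L)/2)·‖x_{k+1} − v_k‖². -/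
/-!
Comparing the exact proximal point `x_{k+1}` with the candidate `w = v_k` in the proximal
objective gives `⟪∇f(v_k), x_{k+1} - v_k⟫ + g(x_{k+1}) ≤ g(v_k) - (ρ/2)‖x_{k+1} - v_k‖²`.
Adding the descent lemma `f(v + d) ≤ f(v) + ⟪∇f(v), d⟫ + (L/2)‖d‖²` yields
`F(x_{k+1}) ≤ F(v_k) - ((ρ - L)/2)‖x_{k+1} - v_k‖²`, and the selection rule for `v_k`
gives `F(v_k) ≤ min(F(y_k), Δ_k)` because `F(x_k) ≤ Δ_k`.
-/

open InnerProductSpace Set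

theorem apply_add_le_of_lipschitz_gradient {E : Type*} [NormedAddCommGroup E]
    [InnerProductSpace ℝ E] [CompleteSpace E] (f : E → ℝ) (f' : E → E) (L : ℝ)
    (hf : ∀ x, HasGradientAt f (f' x) x) (hlip : ∀ x y, ‖f' x - f' y‖ ≤ L * ‖x - y‖) (p d : E) :
    f (p + d) ≤ f p + ⟪f' p, d⟫_ℝ + L / 2 * ‖d‖ ^ 2 := by
  set φ : ℝ → ℝ := fun t => f (p + t • d) - t * ⟪f' p, d⟫_ℝ - L / 2 * t ^ 2 * ‖d‖ ^ 2
  have hφ : ∀ t : ℝ, HasDerivAt φ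
      (⟪f' (p + t • d), d⟫_ℝ - ⟪f' p, d⟫_ℝ - L * t * ‖d‖ ^ 2) t := by
    intro t
    have hline : HasDerivAt (fun s : ℝ => p + s • d) d t := by
      simpa using ((hasDerivAt_id t).smul_const d).const_add p
    have hf_line := (hf (p + t • d)).hasFDerivAt.comp_hasDerivAt t hline
    simp only [toDual_apply_apply, Function.comp_def] at hf_line
    exact ((hf_line.sub ((hasDerivAt_id t).mul_const ⟪f' p, d⟫_ℝ)).sub
      (((hasDerivAt_pow 2 t).const_mul (L / 2)).mul_const (‖d‖ ^ 2))).congr_deriv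
        (by push_cast; ring)
  have hφ'_nonpos : ∀ t ∈ interior (Ici (0 : ℝ)),
      ⟪f' (p + t • d), d⟫_ℝ - ⟪f' p, d⟫_ℝ - L * t * ‖d‖ ^ 2 ≤ 0 := by
    intro t ht
    rw [interior_Ici, mem_Ioi] at ht
    have hgrad : ‖f' (p + t • d) - f' p‖ ≤ L * (t * ‖d‖) := by
      simpa [norm_smul, abs_of_pos ht] using hlip (p + t • d) p
    calc ⟪f' (p + t • d), d⟫_ℝ - ⟪f' p, d⟫_ℝ - L * t * ‖d‖ ^ 2
        = ⟪f' (p + t • d) - f' p, d⟫_ℝ - L * t * ‖d‖ ^ 2 := by rw [inner_sub_left]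
      _ ≤ ‖f' (p + t • d) - f' p‖ * ‖d‖ - L * t * ‖d‖ ^ 2 := by
        gcongr; exact real_inner_le_norm _ _
      _ ≤ 0 := by nlinarith [mul_le_mul_of_nonneg_right hgrad (norm_nonneg d)]
  have hanti : AntitoneOn φ (Ici 0) :=
    antitoneOn_of_hasDerivWithinAt_nonpos (convex_Ici 0)
      (fun t _ => (hφ t).continuousAt.continuousWithinAt)
      (fun t _ => (hφ t).hasDerivWithinAt) hφ'_nonpos
  have := hanti (mem_Ici.2 le_rfl) (mem_Ici.2 zero_le_one) zero_le_one
  simp only [φ, zero_smul, add_zero, one_smul] at this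
  linarith

theorem inner_add_le_of_prox_step {E : Type*} [NormedAddCommGroup E] [InnerProductSpace ℝ E]
    (g : E → ℝ) {η : ℝ} (hη : 0 < η) (p G u : E)
    (hu : (1 / 2) * ‖u - (p - η • G)‖ ^ 2 + η * g u ≤
      (1 / 2) * ‖p - (p - η • G)‖ ^ 2 + η * g p) :
    ⟪G, u - p⟫_ℝ + g u ≤ g p - (1 / η) / 2 * ‖u - p‖ ^ 2 := by
  have hexpand : ‖u - (p - η • G)‖ ^ 2 = ‖u - p‖ ^ 2 + 2 * (η * ⟪G, u - p⟫_ℝ) + ‖η • G‖ ^ 2 := by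
    rw [show u - (p - η • G) = (u - p) + η • G by abel, norm_add_sq_real, real_inner_smul_right,
      real_inner_comm]
  rw [hexpand, sub_sub_cancel] at hu
  have hscaled : η * (⟪G, u - p⟫_ℝ + g u) ≤ η * (g p - (1 / η) / 2 * ‖u - p‖ ^ 2) := by
    rw [mul_sub, ← mul_assoc, mul_div_assoc', mul_one_div_cancel hη.ne']
    linarith
  exact le_of_mul_le_mul_left hscaled hη

theorem add_le_sub_of_prox_gradient_step {E : Type*} [NormedAddCommGroup E]
    [InnerProductSpace ℝ E] [CompleteSpace E] (f g : E → ℝ) (f' : E → E) {L η : ℝ}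
    (hf : ∀ x, HasGradientAt f (f' x) x) (hlip : ∀ x y, ‖f' x - f' y‖ ≤ L * ‖x - y‖)
    (hη : 0 < η) (p u : E)
    (hu : (1 / 2) * ‖u - (p - η • f' p)‖ ^ 2 + η * g u ≤
      (1 / 2) * ‖p - (p - η • f' p)‖ ^ 2 + η * g p) :
    f u + g u ≤ f p + g p - (1 / η - L) / 2 * ‖u - p‖ ^ 2 := by
  have hdescent := apply_add_le_of_lipschitz_gradient f f' L hf hlip p (u - p)
  rw [add_sub_cancel] at hdescent
  have hprox := inner_add_le_of_prox_step g hη p (f' p) u hu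
  linarith

theorem apply_ite_le_min {α β : Type*} [LinearOrder β] (F : α → β) {x y : α} {Δ : β}
    (hx : F x ≤ Δ) : F (if F y ≤ Δ then y else x) ≤ min (F y) Δ := by
  split_ifs with hy
  · exact le_min le_rfl hy
  · rwa [min_eq_right (le_of_not_ge hy)]

/-- Proposition 2: sufficient decrease for niAPG with exact proximal steps.
If in Algorithm niAPG every proximal step is exact, then for every `k ≥ 1`,
`F x_{k+1} ≤ min (F y_k) Δ_k - ((ρ - L)/2) * ‖x_{k+1} - v_k‖²`. -/
theorem niAPG_exact_sufficient_decrease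
    {E : Type*} [NormedAddCommGroup E] [InnerProductSpace ℝ E] [FiniteDimensional ℝ E]
    (f g F : E → ℝ) (f' : E → E) (L η ρ : ℝ)
    (hf : ∀ x, HasGradientAt f (f' x) x)
    (hlip : ∀ x y, ‖f' x - f' y‖ ≤ L * ‖x - y‖)
    (hF : ∀ x, F x = f x + g x)
    (hη : 0 < η) (hρ : ρ = 1 / η)
    (q : ℕ) (x y v z : ℕ → E) (Δ : ℕ → ℝ)
    (hΔ : ∀ k, ∀ hk : 1 ≤ k, Δ k =
      (Finset.Icc (max 1 (k - q)) k).sup' (Finset.nonempty_Icc.mpr (by omega))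
        (fun t => F (x t)))
    (hv : ∀ k, 1 ≤ k → v k = if F (y k) ≤ Δ k then y k else x k)
    (hz : ∀ k, 1 ≤ k → z k = v k - η • f' (v k))
    (hprox : ∀ k, 1 ≤ k → ∀ w : E,
      (1 / 2) * ‖x (k + 1) - z k‖ ^ 2 + η * g (x (k + 1)) ≤
        (1 / 2) * ‖w - z k‖ ^ 2 + η * g w) :
    ∀ k, 1 ≤ k →
      F (x (k + 1)) ≤ min (F (y k)) (Δ k) - ((ρ - L) / 2) * ‖x (k + 1) - v k‖ ^ 2 := by
  intro k hk
  have hstep : F (x (k + 1)) ≤ F (v k) - ((ρ - L) / 2) * ‖x (k + 1) - v k‖ ^ 2 := by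
    have hprox := hprox k hk (v k)
    rw [hz k hk] at hprox
    rw [hF, hF, hρ]
    exact add_le_sub_of_prox_gradient_step f g f' hf hlip hη (v k) (x (k + 1)) hprox
  have hxk : F (x k) ≤ Δ k := by
    rw [hΔ k hk]
    exact Finset.le_sup' (fun t => F (x t)) (Finset.mem_Icc.2 ⟨by omega, le_rfl⟩)
  have hselect : F (v k) ≤ min (F (y k)) (Δ k) := by
    rw [hv k hk]
    exact apply_ite_le_min F hxk
  linarith
end

section
/- Let v ∈ E, set z = v − η·∇f(v), let x̂ be a global minimizer of h(w) = (1/2)·‖w − z‖² + η·g(w), and let x⁺ ∈ E satisfy h(x⁺) ≤ h(x̂) + ε for some ε ≥ 0. Then ⟨x⁺ − v, ∇f(v)⟩ + (ρ/2)·‖x⁺ − v‖² + g(x⁺) ≤ g(v) + ρ·ε. -/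
open scoped RealInnerProductSpace

/-
Compare the inexact proximal point `x⁺` with the base point `v` instead of with `x̂`:
minimality of `x̂` gives `h x⁺ ≤ h v + ε`. For `z = v - η ∇f(v)` the difference `h x⁺ - h v`
expands to `(1/2)‖x⁺ - v‖² + η (⟪x⁺ - v, ∇f v⟫ + g x⁺ - g v)`, and dividing by `η` is the claim.
-/

section ProxObjective

variable {E : Type*} [NormedAddCommGroup E] [InnerProductSpace ℝ E]

noncomputable def proxObjective (g : E → ℝ) (η : ℝ) (z w : E) : ℝ :=
  (1 / 2) * ‖w - z‖ ^ 2 + η * g w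

theorem proxObjective_sub_proxObjective_gradStep (g : E → ℝ) (η : ℝ) (v d x : E) :
    proxObjective g η (v - η • d) x - proxObjective g η (v - η • d) v =
      (1 / 2) * ‖x - v‖ ^ 2 + η * (⟪x - v, d⟫ + g x - g v) := by
  have hx : x - (v - η • d) = (x - v) + η • d := by abel
  have hv : v - (v - η • d) = η • d := by abel
  simp only [proxObjective, hx, hv, norm_add_sq_real, real_inner_smul_right]
  ring

theorem inner_add_half_norm_sq_add_le_of_proxObjective_gradStep_le {g : E → ℝ} {η ε : ℝ}
    (hη : 0 < η) {v d x : E}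
    (hx : proxObjective g η (v - η • d) x ≤ proxObjective g η (v - η • d) v + ε) :
    ⟪x - v, d⟫ + (1 / η / 2) * ‖x - v‖ ^ 2 + g x ≤ g v + 1 / η * ε := by
  have hdiff := proxObjective_sub_proxObjective_gradStep g η v d x
  have key : η * (⟪x - v, d⟫ + (1 / η / 2) * ‖x - v‖ ^ 2 + g x) ≤ η * (g v + 1 / η * ε) := by
    field_simp
    linarith
  exact le_of_mul_le_mul_left key hη

end ProxObjective

theorem inexact_prox_key_inequality_general
    {E : Type*} [NormedAddCommGroup E] [InnerProductSpace ℝ E]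
    (g : E → ℝ) (f' : E → E) (η ρ : ℝ)
    (hη : 0 < η) (hρ : ρ = 1 / η)
    (v xhat xp : E) (ε : ℝ)
    (hxhat : ∀ w : E, (1 / 2) * ‖xhat - (v - η • f' v)‖ ^ 2 + η * g xhat ≤
      (1 / 2) * ‖w - (v - η • f' v)‖ ^ 2 + η * g w)
    (hxp : (1 / 2) * ‖xp - (v - η • f' v)‖ ^ 2 + η * g xp ≤
      ((1 / 2) * ‖xhat - (v - η • f' v)‖ ^ 2 + η * g xhat) + ε) :
    ⟪xp - v, f' v⟫ + (ρ / 2) * ‖xp - v‖ ^ 2 + g xp ≤ g v + ρ * ε := by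
  subst hρ
  have hxp_v : proxObjective g η (v - η • f' v) xp ≤ proxObjective g η (v - η • f' v) v + ε :=
    hxp.trans (add_le_add_left (hxhat v) ε)
  exact inner_add_half_norm_sq_add_le_of_proxObjective_gradStep_le hη hxp_v

/-- key inequality for an ε-inexact proximal step.
If `x̂` minimizes `h(w) = (1/2)‖w - z‖² + η g(w)` with `z = v - η • ∇f v`, and
`h x⁺ ≤ h x̂ + ε`, then `⟪x⁺ - v, ∇f v⟫ + (ρ/2)‖x⁺ - v‖² + g x⁺ ≤ g v + ρ ε`. -/
theorem inexact_prox_key_inequality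
    {E : Type*} [NormedAddCommGroup E] [InnerProductSpace ℝ E] [FiniteDimensional ℝ E]
    (f g F : E → ℝ) (f' : E → E) (L η ρ : ℝ)
    (hL : 0 < L)
    (hf : ∀ x, HasGradientAt f (f' x) x)
    (hlip : ∀ x y, ‖f' x - f' y‖ ≤ L * ‖x - y‖)
    (hg : LowerSemicontinuous g)
    (hF : ∀ x, F x = f x + g x)
    (hη : 0 < η) (hηL : η < 1 / L) (hρ : ρ = 1 / η)
    (v xhat xp : E) (ε : ℝ) (hε : 0 ≤ ε)
    (hxhat : ∀ w : E, (1 / 2) * ‖xhat - (v - η • f' v)‖ ^ 2 + η * g xhat ≤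
      (1 / 2) * ‖w - (v - η • f' v)‖ ^ 2 + η * g w)
    (hxp : (1 / 2) * ‖xp - (v - η • f' v)‖ ^ 2 + η * g xp ≤
      ((1 / 2) * ‖xhat - (v - η • f' v)‖ ^ 2 + η * g xhat) + ε) :
    ⟪xp - v, f' v⟫ + (ρ / 2) * ‖xp - v‖ ^ 2 + g xp ≤ g v + ρ * ε :=
  inexact_prox_key_inequality_general g f' η ρ hη hρ v xhat xp ε hxhat hxp
end

section
/- Let (v_j)_{j≥1} and (x_j⁺)_{j≥1} be sequences in E such that for every j, x_j⁺ is an exact proximal point of v_j − η·∇f(v_j) (a global minimizer of w ↦ (1/2)·‖w − (v_j − η·∇f(v_j))‖² + η·g(w)), and suppose v_j → x* and x_j⁺ → x* for some x* ∈ E. Then g(x_j⁺) → g(x*) (hence also F(x_j⁺) → F(x*)), and x* is an exact proximal point of x* − η·∇f(x*), i.e., x* is a global minimizer of w ↦ (1/2)·‖w − (x* − η·∇f(x*))‖² + η·g(w). -/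
/-!
Passing to the limit in the minimality inequality of the `j`-th proximal step at `w = x*` bounds
`limsup g(x_j⁺)` by `g(x*)`, while lower semicontinuity bounds `liminf g(x_j⁺)` from below by it;
so `g(x_j⁺) → g(x*)`. With this, both sides of the minimality inequality at an arbitrary `w`
converge (the prox centres `v_j − η ∇f(v_j)` converge since `∇f` is Lipschitz), and the inequality
survives in the limit.
-/

open Filter Topology

theorem LowerSemicontinuousAt.tendsto_of_eventually_le_of_tendsto {α X β : Type*}
    [TopologicalSpace X] [LinearOrder β] [TopologicalSpace β] [OrderTopology β]
    {g : X → β} {x : X} (hg : LowerSemicontinuousAt g x) {l : Filter α} {u : α → X}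
    (hu : Tendsto u l (𝓝 x)) {b : α → β} (hb : Tendsto b l (𝓝 (g x)))
    (hle : ∀ᶠ j in l, g (u j) ≤ b j) : Tendsto (fun j => g (u j)) l (𝓝 (g x)) := by
  refine tendsto_order.2 ⟨fun a ha => hu.eventually (hg a ha), fun a ha => ?_⟩
  filter_upwards [hle, hb.eventually (eventually_lt_nhds ha)] with j hj hja
  exact hj.trans_lt hja

theorem tendsto_and_isMinimizer_of_tendsto_minimizers {α X Y : Type*}
    [TopologicalSpace X] [TopologicalSpace Y] {q : X → Y → ℝ} {g : X → ℝ}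
    (hq : Continuous (Function.uncurry q)) (hg : LowerSemicontinuous g)
    {l : Filter α} [l.NeBot] {u : α → Y} {y : α → X} {u₀ : Y} {y₀ : X}
    (hmin : ∀ j w, q (y j) (u j) + g (y j) ≤ q w (u j) + g w)
    (hu : Tendsto u l (𝓝 u₀)) (hy : Tendsto y l (𝓝 y₀)) :
    Tendsto (fun j => g (y j)) l (𝓝 (g y₀)) ∧ ∀ w, q y₀ u₀ + g y₀ ≤ q w u₀ + g w := by
  have hq_along (w : α → X) (w₀ : X) (hw : Tendsto w l (𝓝 w₀)) :
      Tendsto (fun j => q (w j) (u j)) l (𝓝 (q w₀ u₀)) :=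
    (hq.tendsto (w₀, u₀)).comp (hw.prodMk_nhds hu)
  have hg_conv : Tendsto (fun j => g (y j)) l (𝓝 (g y₀)) := by
    refine LowerSemicontinuousAt.tendsto_of_eventually_le_of_tendsto (hg y₀) hy
      (b := fun j => q y₀ (u j) + g y₀ - q (y j) (u j)) ?_
      (Eventually.of_forall fun j => by linarith [hmin j y₀])
    simpa using ((hq_along _ y₀ tendsto_const_nhds).add_const (g y₀)).sub (hq_along y y₀ hy)
  exact ⟨hg_conv, fun w => le_of_tendsto_of_tendsto' ((hq_along y y₀ hy).add hg_conv)
    ((hq_along _ w tendsto_const_nhds).add_const (g w)) fun j => hmin j w⟩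

theorem exact_prox_limit_point_general
    {E : Type*} [NormedAddCommGroup E] [InnerProductSpace ℝ E] [FiniteDimensional ℝ E]
    (f g F : E → ℝ) (f' : E → E) (L η : ℝ)
    (hf : ∀ x, HasGradientAt f (f' x) x)
    (hlip : ∀ x y, ‖f' x - f' y‖ ≤ L * ‖x - y‖)
    (hg : LowerSemicontinuous g)
    (hF : ∀ x, F x = f x + g x)
    (hη : 0 < η)
    (v xp : ℕ → E) (xstar : E)
    (hprox : ∀ j : ℕ, ∀ w : E,
      (1 / 2) * ‖xp j - (v j - η • f' (v j))‖ ^ 2 + η * g (xp j) ≤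
        (1 / 2) * ‖w - (v j - η • f' (v j))‖ ^ 2 + η * g w)
    (hv : Tendsto v atTop (nhds xstar))
    (hxp : Tendsto xp atTop (nhds xstar)) :
    Tendsto (fun j => g (xp j)) atTop (nhds (g xstar)) ∧
    Tendsto (fun j => F (xp j)) atTop (nhds (F xstar)) ∧
    (∀ w : E, (1 / 2) * ‖xstar - (xstar - η • f' xstar)‖ ^ 2 + η * g xstar ≤
      (1 / 2) * ‖w - (xstar - η • f' xstar)‖ ^ 2 + η * g w) := by
  have hf'_cont : Continuous f' :=
    (LipschitzWith.of_dist_le' (K := L) fun x y => by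
      simpa only [dist_eq_norm] using hlip x y).continuous
  have hcentre : Tendsto (fun j => v j - η • f' (v j)) atTop (𝓝 (xstar - η • f' xstar)) :=
    hv.sub (((hf'_cont.tendsto xstar).comp hv).const_smul η)
  have hηg : LowerSemicontinuous fun w => η * g w :=
    (continuous_const_mul η).comp_lowerSemicontinuous hg
      fun _ _ h => mul_le_mul_of_nonneg_left h hη.le
  obtain ⟨hηg_conv, hmin⟩ := tendsto_and_isMinimizer_of_tendsto_minimizers
    (q := fun w c => (1 / 2) * ‖w - c‖ ^ 2) (by fun_prop) hηg hprox hcentre hxp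
  have hg_conv : Tendsto (fun j => g (xp j)) atTop (𝓝 (g xstar)) := by
    simpa [← mul_assoc, inv_mul_cancel₀ hη.ne'] using hηg_conv.const_mul η⁻¹
  refine ⟨hg_conv, ?_, hmin⟩
  simpa only [hF, Function.comp_def] using ((hf xstar).continuousAt.tendsto.comp hxp).add hg_conv

/-- limit points of exact proximal steps are proximal fixed points.
If `x_j⁺` is an exact proximal point of `v_j − η ∇f(v_j)` for each `j`, and both `v_j → x*`
and `x_j⁺ → x*`, then `g(x_j⁺) → g(x*)` (hence `F(x_j⁺) → F(x*)`) and `x*` is an exact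
proximal point of `x* − η ∇f(x*)`. -/
theorem exact_prox_limit_point
    {E : Type*} [NormedAddCommGroup E] [InnerProductSpace ℝ E] [FiniteDimensional ℝ E]
    (f g F : E → ℝ) (f' : E → E) (L η ρ : ℝ)
    (hL : 0 < L)
    (hf : ∀ x, HasGradientAt f (f' x) x)
    (hlip : ∀ x y, ‖f' x - f' y‖ ≤ L * ‖x - y‖)
    (hg : LowerSemicontinuous g)
    (hF : ∀ x, F x = f x + g x)
    (hη : 0 < η) (hηL : η < 1 / L) (hρ : ρ = 1 / η)
    (v xp : ℕ → E) (xstar : E)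
    (hprox : ∀ j : ℕ, ∀ w : E,
      (1 / 2) * ‖xp j - (v j - η • f' (v j))‖ ^ 2 + η * g (xp j) ≤
        (1 / 2) * ‖w - (v j - η • f' (v j))‖ ^ 2 + η * g w)
    (hv : Tendsto v atTop (nhds xstar))
    (hxp : Tendsto xp atTop (nhds xstar)) :
    Tendsto (fun j => g (xp j)) atTop (nhds (g xstar)) ∧
    Tendsto (fun j => F (xp j)) atTop (nhds (F xstar)) ∧
    (∀ w : E, (1 / 2) * ‖xstar - (xstar - η • f' xstar)‖ ^ 2 + η * g xstar ≤
      (1 / 2) * ‖w - (xstar - η • f' xstar)‖ ^ 2 + η * g w) :=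
  exact_prox_limit_point_general f g F f' L η hf hlip hg hF hη v xp xstar hprox hv hxp
end
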